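/- Let E be a row-finite graph and v ∈ E^0. The vertex v has no bifurcation (for every vertex u reachable from v, |s^{-1}(u)| ≤ 1) if and only if v = v(0) is a minimal element of M_E^{gr} (b ≤ v implies v ≤ b). -/

import Mathlib

set_option linter.unusedSectionVars false

/-- The algebraic preorder on a commutative monoid: `a ≤ b` iff `b = a + c` for some `c`. -/
def algLE {M : Type*} [AddCommMonoid M] (a b : M) : Prop := ∃ c, b = a + c

/-- A row-finite directed graph: vertices `V`, edges `Ed`, source `s`, range `r`,
and for each vertex the (finite) set of edges it emits. -/
structure RFGraph (V : Type) (Ed : Type) where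
  s : Ed → V
  r : Ed → V
  emit : V → Finset Ed
  mem_emit : ∀ e v, e ∈ emit v ↔ s e = v

namespace RFGraph

variable {V Ed : Type} [DecidableEq V] (G : RFGraph V Ed)

/-- The one-step rewriting relation `→₁` on the free commutative monoid `Multiset V`:
replace one occurrence of a non-sink vertex `v` by the sum of ranges of edges emitted by `v`. -/
def Step1 (a b : Multiset V) : Prop :=
  ∃ v : V, v ∈ a ∧ G.emit v ≠ ∅ ∧ b = a.erase v + (G.emit v).val.map G.r

/-- The reflexive-transitive closure `→` of `→₁`. -/
def Step : Multiset V → Multiset V → Prop := Relation.ReflTransGen G.Step1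

/-- The congruence on the free commutative monoid generated by `→₁`. -/
def gcon : AddCon (Multiset V) := addConGen G.Step1

/-- The graph monoid `M_E`. -/
def GM := G.gcon.Quotient

instance : AddCommMonoid G.GM := inferInstanceAs (AddCommMonoid G.gcon.Quotient)

/-- One-step rewriting for the talented monoid: replace `v(i)` by `Σ_{e ∈ s⁻¹(v)} r(e)(i+1)`. -/
def TStep1 (a b : Multiset (V × ℤ)) : Prop :=
  ∃ (v : V) (i : ℤ), (v, i) ∈ a ∧ G.emit v ≠ ∅ ∧
    b = a.erase (v, i) + (G.emit v).val.map (fun e => (G.r e, i + 1))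

/-- The congruence generated by the talented one-step relation. -/
def tcon : AddCon (Multiset (V × ℤ)) := addConGen G.TStep1

/-- The talented monoid `M_E^{gr}`. -/
def TM := G.tcon.Quotient

instance : AddCommMonoid G.TM := inferInstanceAs (AddCommMonoid G.tcon.Quotient)

/-- The generator `v(i)` of the talented monoid. -/
def tgen (v : V) (i : ℤ) : G.TM := G.tcon.mk' {(v, i)}

/-- The shift `v(i) ↦ v(i+n)` on the free commutative monoid `Multiset (V × ℤ)`. -/
def shiftMul (n : ℤ) : Multiset (V × ℤ) →+ Multiset (V × ℤ) where
  toFun a := a.map fun p => (p.1, p.2 + n)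
  map_zero' := rfl
  map_add' a b := Multiset.map_add (fun p => (p.1, p.2 + n)) a b

lemma shift_inj (n : ℤ) : Function.Injective (fun p : V × ℤ => (p.1, p.2 + n)) := by
  rintro ⟨a, b⟩ ⟨c, d⟩ h
  simp only [Prod.mk.injEq] at h
  exact Prod.ext h.1 (by omega)

lemma tstep1_shift (n : ℤ) {a b : Multiset (V × ℤ)} (h : G.TStep1 a b) :
    G.TStep1 (shiftMul n a) (shiftMul n b) := by
  obtain ⟨v, i, hv, hne, rfl⟩ := h
  refine ⟨v, i + n, Multiset.mem_map.2 ⟨(v, i), hv, rfl⟩, hne, ?_⟩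
  show Multiset.map _ _ = _
  rw [Multiset.map_add]
  congr 1
  · exact (Multiset.map_erase _ (shift_inj n) (v, i) a)
  · rw [Multiset.map_map]
    congr 1
    funext e
    simp only [Function.comp_apply]
    congr 1
    omega

lemma tcon_shift (n : ℤ) {a b : Multiset (V × ℤ)} (h : G.tcon a b) :
    G.tcon (shiftMul n a) (shiftMul n b) := by
  have hle : addConGen G.TStep1 ≤
      { r := fun a b => G.tcon (shiftMul n a) (shiftMul n b)
        iseqv := ⟨fun _ => G.tcon.refl _, fun h => G.tcon.symm h,
          fun h₁ h₂ => G.tcon.trans h₁ h₂⟩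
        add' := fun h₁ h₂ => by
          simpa only [map_add] using G.tcon.add h₁ h₂ } := by
    refine AddCon.addConGen_le.2 fun x y hxy => ?_
    exact AddConGen.Rel.of _ _ (G.tstep1_shift n hxy)
  exact hle h

/-- The `ℤ`-action on the talented monoid, `ⁿ(v(i)) = v(i+n)`. -/
def tshift (n : ℤ) : G.TM →+ G.TM :=
  G.tcon.lift (G.tcon.mk'.comp (shiftMul n)) (by
    intro a b h
    show G.tcon.mk' (shiftMul n a) = G.tcon.mk' (shiftMul n b)
    exact (AddCon.eq _).2 (G.tcon_shift n h))

/-- Reachability: there is a (possibly trivial) path from `u` to `v`. -/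
def Reaches (u v : V) : Prop :=
  Relation.ReflTransGen (fun a b => ∃ e : Ed, G.s e = a ∧ G.r e = b) u v

/-- A cycle: a nonempty path of edges, closed up, with distinct source vertices. -/
def IsCycle (p : List Ed) : Prop :=
  ∃ h : p ≠ [], List.Chain' (fun e f => G.r e = G.s f) p ∧
    G.r (p.getLast h) = G.s (p.head h) ∧ (p.map G.s).Nodup

/-- The cycle `p` has an exit: some vertex on it emits an edge not on the cycle. -/
def HasExit (p : List Ed) : Prop :=
  ∃ e : Ed, (∃ f ∈ p, G.s e = G.s f) ∧ e ∉ p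

/-- The cycle `p` has no exit: every vertex on it emits exactly its cycle edge. -/
def NoExit (p : List Ed) : Prop :=
  ∀ e ∈ p, G.emit (G.s e) = {e}

/-- `ℤ`-order-ideals of the talented monoid. -/
def IsOrderIdeal (I : Set G.TM) : Prop :=
  (0 : G.TM) ∈ I ∧ (∀ a b : G.TM, a ∈ I → b ∈ I → a + b ∈ I) ∧
    (∀ (n : ℤ) (a : G.TM), a ∈ I → G.tshift n a ∈ I) ∧
    (∀ a b : G.TM, algLE a b → b ∈ I → a ∈ I)

/-- The smallest `ℤ`-order-ideal of `M_E^{gr}` containing `v(0)`. -/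
def genIdeal (v : V) : Set G.TM :=
  ⋂₀ {I : Set G.TM | G.IsOrderIdeal I ∧ G.tgen v 0 ∈ I}

/-- Minimality in the talented monoid: `0 ≠ b ≤ a` implies `a ≤ b`. -/
def TMin (a : G.TM) : Prop := ∀ b : G.TM, b ≠ 0 → algLE b a → algLE a b

/-- The covering graph `\bar E`. -/
def cover : RFGraph (V × ℤ) (Ed × ℤ) where
  s p := (G.s p.1, p.2)
  r p := (G.r p.1, p.2 + 1)
  emit p := (G.emit p.1).map ⟨fun e => (e, p.2), fun a b h => by
    simpa using congrArg Prod.fst h⟩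
  mem_emit := by
    rintro ⟨e, n⟩ ⟨v, m⟩
    simp only [Finset.mem_map, Function.Embedding.coeFn_mk, Prod.mk.injEq, G.mem_emit]
    constructor
    · rintro ⟨a, ha, rfl, rfl⟩; exact ⟨ha, rfl⟩
    · rintro ⟨rfl, rfl⟩; exact ⟨e, rfl, rfl⟩

/-- The set of vertices on a cycle. -/
def cycVerts (p : List Ed) : Set V := {v | ∃ e ∈ p, G.s e = v}

end RFGraph

/-! Rewriting `v(i) ↦ Σ_{e ∈ s⁻¹(v)} r(e)(i+1)` in the free commutative monoid on `E⁰ × ℤ` is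
locally confluent, so equality in `M_E^{gr}` is joinability of rewrites. Without bifurcations every
rewrite of `v(0)` is a single generator, so `v(0)` has no decomposition `b + c` with `b, c ≠ 0`.
Conversely, a bifurcation at a vertex reachable from `v` gives `v(0) = w(k) + c` with `c ≠ 0`, and
minimality would force `v(0) = v(0) + d + c`. This is impossible: rewriting every generator up to
a high level is invariant under rewriting, additive, and never decreases the number of
generators. -/

lemma Multiset.card_le_card_bind {α β : Type*} {s : Multiset α} {f : α → Multiset β}
    (hf : ∀ x ∈ s, f x ≠ 0) : Multiset.card s ≤ Multiset.card (s.bind f) := by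
  induction s using Multiset.induction_on with
  | empty => simp
  | cons a s ih =>
    rw [Multiset.cons_bind, Multiset.card_add, Multiset.card_cons, add_comm]
    gcongr
    · exact Multiset.card_pos.2 (hf a (Multiset.mem_cons_self a s))
    · exact ih fun x hx => hf x (Multiset.mem_cons_of_mem hx)

namespace RFGraph

variable {V Ed : Type} [DecidableEq V] (G : RFGraph V Ed)

def expand (v : V) (i : ℤ) : Multiset (V × ℤ) := (G.emit v).val.map fun e => (G.r e, i + 1)

def TStep : Multiset (V × ℤ) → Multiset (V × ℤ) → Prop := Relation.ReflTransGen G.TStep1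

def NoBifurcation (v : V) : Prop := ∀ u, G.Reaches v u → (G.emit u).card ≤ 1

variable {G}

lemma card_expand (v : V) (i : ℤ) : Multiset.card (G.expand v i) = (G.emit v).card :=
  Multiset.card_map _ _

lemma expand_ne_zero {v : V} (hv : G.emit v ≠ ∅) (i : ℤ) : G.expand v i ≠ 0 := by
  rw [← Multiset.card_pos, card_expand]
  exact Finset.card_pos.2 (Finset.nonempty_iff_ne_empty.2 hv)

lemma tstep1_iff {a b : Multiset (V × ℤ)} :
    G.TStep1 a b ↔ ∃ v i, (v, i) ∈ a ∧ G.emit v ≠ ∅ ∧ b = a.erase (v, i) + G.expand v i :=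
  Iff.rfl

lemma tstep1_of_mem {a : Multiset (V × ℤ)} {v : V} {i : ℤ} (hm : (v, i) ∈ a)
    (hv : G.emit v ≠ ∅) : G.TStep1 a (a.erase (v, i) + G.expand v i) :=
  ⟨v, i, hm, hv, rfl⟩

lemma tstep1_cons {v : V} (hv : G.emit v ≠ ∅) (i : ℤ) (a : Multiset (V × ℤ)) :
    G.TStep1 ((v, i) ::ₘ a) (G.expand v i + a) := by
  simpa [add_comm] using tstep1_of_mem (Multiset.mem_cons_self (v, i) a) hv

lemma TStep1.add_right {a b : Multiset (V × ℤ)} (h : G.TStep1 a b) (c : Multiset (V × ℤ)) :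
    G.TStep1 (a + c) (b + c) := by
  obtain ⟨v, i, hm, hv, rfl⟩ := tstep1_iff.1 h
  simpa only [Multiset.erase_add_left_pos _ hm, add_right_comm] using
    tstep1_of_mem (Multiset.mem_add.2 (Or.inl hm)) hv (a := a + c)

lemma TStep1.card_le {a b : Multiset (V × ℤ)} (h : G.TStep1 a b) :
    Multiset.card a ≤ Multiset.card b := by
  obtain ⟨v, i, hm, hv, rfl⟩ := tstep1_iff.1 h
  have hexpand := Multiset.card_pos.2 (expand_ne_zero hv i)
  have herase := Multiset.card_erase_add_one hm
  rw [Multiset.card_add]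
  omega

lemma TStep.add {a b c d : Multiset (V × ℤ)} (hab : G.TStep a b) (hcd : G.TStep c d) :
    G.TStep (a + c) (b + d) := by
  have hb : G.TStep (a + c) (b + c) :=
    Relation.ReflTransGen.lift (· + c) (fun _ _ h => TStep1.add_right h c) _ _ hab
  have hd : G.TStep (c + b) (d + b) :=
    Relation.ReflTransGen.lift (· + b) (fun _ _ h => TStep1.add_right h b) _ _ hcd
  rw [add_comm c, add_comm d] at hd
  exact hb.trans hd

lemma TStep.card_le {a b : Multiset (V × ℤ)} (h : G.TStep a b) :
    Multiset.card a ≤ Multiset.card b := by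
  induction h with
  | refl => exact le_rfl
  | tail _ hst ih => exact ih.trans hst.card_le

lemma TStep.eq_zero_of_zero {z : Multiset (V × ℤ)} (h : G.TStep 0 z) : z = 0 := by
  induction h with
  | refl => rfl
  | tail _ hst ih =>
    subst ih
    obtain ⟨v, i, hm, -⟩ := tstep1_iff.1 hst
    exact absurd hm (Multiset.notMem_zero _)

lemma TStep.eq_zero_of_eq_zero {a : Multiset (V × ℤ)} (h : G.TStep a 0) : a = 0 :=
  Multiset.card_eq_zero.1 (Nat.le_zero.1 h.card_le)

lemma TStep.exists_of_add {a c z : Multiset (V × ℤ)} (h : G.TStep (a + c) z) :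
    ∃ x y, G.TStep a x ∧ G.TStep c y ∧ z = x + y := by
  induction h with
  | refl => exact ⟨a, c, .refl, .refl, rfl⟩
  | tail _ hst ih =>
    obtain ⟨x, y, hax, hcy, rfl⟩ := ih
    obtain ⟨v, i, hm, hv, rfl⟩ := tstep1_iff.1 hst
    rcases Multiset.mem_add.1 hm with hx | hy
    · refine ⟨_, y, hax.tail (tstep1_of_mem hx hv), hcy, ?_⟩
      rw [Multiset.erase_add_left_pos _ hx, add_right_comm]
    · refine ⟨x, _, hax, hcy.tail (tstep1_of_mem hy hv), ?_⟩
      rw [Multiset.erase_add_right_pos _ hy, add_assoc]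

/-- Two distinct generators are rewritten independently of each other. -/
lemma tstep1_diamond {a b c : Multiset (V × ℤ)} (hb : G.TStep1 a b) (hc : G.TStep1 a c) :
    b = c ∨ ∃ d, G.TStep1 b d ∧ G.TStep1 c d := by
  obtain ⟨v, i, hvi, hv, rfl⟩ := tstep1_iff.1 hb
  obtain ⟨w, j, hwj, hw, rfl⟩ := tstep1_iff.1 hc
  by_cases heq : (w, j) = (v, i)
  · obtain ⟨rfl, rfl⟩ := Prod.ext_iff.1 heq
    exact .inl rfl
  right
  have hwj' : (w, j) ∈ a.erase (v, i) := (Multiset.mem_erase_of_ne heq).2 hwj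
  have hvi' : (v, i) ∈ a.erase (w, j) := (Multiset.mem_erase_of_ne (Ne.symm heq)).2 hvi
  refine ⟨(a.erase (v, i)).erase (w, j) + G.expand v i + G.expand w j, ?_, ?_⟩
  · simpa only [Multiset.erase_add_left_pos _ hwj'] using
      tstep1_of_mem (Multiset.mem_add.2 (Or.inl hwj')) hw (a := a.erase (v, i) + G.expand v i)
  · simpa only [Multiset.erase_add_left_pos _ hvi', Multiset.erase_comm, add_right_comm] using
      tstep1_of_mem (Multiset.mem_add.2 (Or.inl hvi')) hv (a := a.erase (w, j) + G.expand w j)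

lemma equivalence_join_tstep : Equivalence (Relation.Join G.TStep) := by
  refine Relation.equivalence_join_reflTransGen fun a b c hb hc => ?_
  rcases tstep1_diamond hb hc with rfl | ⟨d, hbd, hcd⟩
  · exact ⟨b, .refl, .refl⟩
  · exact ⟨d, .single hbd, .single hcd⟩

variable (G) in
def joinCon : AddCon (Multiset (V × ℤ)) where
  r := Relation.Join G.TStep
  iseqv := equivalence_join_tstep
  add' := fun ⟨z, haz, hbz⟩ ⟨w, hcw, hdw⟩ => ⟨z + w, haz.add hcw, hbz.add hdw⟩

lemma TStep.tcon {a b : Multiset (V × ℤ)} (h : G.TStep a b) : G.tcon a b := by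
  induction h with
  | refl => exact G.tcon.refl _
  | tail _ hst ih => exact G.tcon.trans ih (AddConGen.Rel.of _ _ hst)

lemma tcon_iff_join {a b : Multiset (V × ℤ)} : G.tcon a b ↔ Relation.Join G.TStep a b := by
  refine ⟨fun h => ?_, fun ⟨z, haz, hbz⟩ => G.tcon.trans haz.tcon (G.tcon.symm hbz.tcon)⟩
  have hle : G.tcon ≤ G.joinCon :=
    AddCon.addConGen_le.2 fun x y hxy => ⟨y, .single hxy, .refl⟩
  exact hle h

lemma eq_zero_of_tcon_zero {a : Multiset (V × ℤ)} (h : G.tcon a 0) : a = 0 := by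
  obtain ⟨z, haz, hz⟩ := tcon_iff_join.1 h
  rw [hz.eq_zero_of_zero] at haz
  exact haz.eq_zero_of_eq_zero

variable (G) in
def develop : ℕ → V × ℤ → Multiset (V × ℤ)
  | 0, p => {p}
  | n + 1, p => if (G.emit p.1).Nonempty then (G.expand p.1 p.2).bind (develop n) else {p}

variable (G) in
/-- Rewrites every generator of level below `N` until level `N` or a sink is reached. For large `N`
it is invariant under rewriting, which replaces normal forms in this non-terminating system. -/
def developTo (N : ℤ) (a : Multiset (V × ℤ)) : Multiset (V × ℤ) :=
  a.bind fun p => G.develop (N - p.2).toNat p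

lemma develop_ne_zero (n : ℕ) (p : V × ℤ) : G.develop n p ≠ 0 := by
  induction n generalizing p with
  | zero => exact Multiset.singleton_ne_zero p
  | succ n ih =>
    rw [develop]
    split_ifs with hp
    · rw [← Multiset.card_pos]
      refine lt_of_lt_of_le ?_ (Multiset.card_le_card_bind fun q _ => ih q)
      exact Multiset.card_pos.2 (expand_ne_zero hp.ne_empty _)
    · exact Multiset.singleton_ne_zero p

lemma card_le_card_developTo (N : ℤ) (a : Multiset (V × ℤ)) :
    Multiset.card a ≤ Multiset.card (G.developTo N a) :=
  Multiset.card_le_card_bind fun p _ => develop_ne_zero _ p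

lemma developTo_add (N : ℤ) (a b : Multiset (V × ℤ)) :
    G.developTo N (a + b) = G.developTo N a + G.developTo N b :=
  Multiset.add_bind a b _

lemma developTo_singleton {v : V} {i N : ℤ} (hv : G.emit v ≠ ∅) (hiN : i < N) :
    G.developTo N {(v, i)} = G.developTo N (G.expand v i) := by
  have hlevel : (N - i).toNat = (N - (i + 1)).toNat + 1 := by omega
  simp only [developTo, Multiset.singleton_bind, hlevel, develop,
    if_pos (Finset.nonempty_iff_ne_empty.2 hv), expand, Multiset.bind_map]

lemma TStep1.developTo_eq {a b : Multiset (V × ℤ)} (h : G.TStep1 a b) :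
    ∃ N₀, ∀ N ≥ N₀, G.developTo N a = G.developTo N b := by
  obtain ⟨v, i, hm, hv, rfl⟩ := tstep1_iff.1 h
  refine ⟨i + 1, fun N hN => ?_⟩
  conv_lhs => rw [← Multiset.cons_erase hm, ← Multiset.singleton_add]
  rw [developTo_add, developTo_add, developTo_singleton hv (by omega), add_comm]

lemma TStep.developTo_eq {a b : Multiset (V × ℤ)} (h : G.TStep a b) :
    ∃ N₀, ∀ N ≥ N₀, G.developTo N a = G.developTo N b := by
  induction h with
  | refl => exact ⟨0, fun _ _ => rfl⟩
  | tail _ hst ih =>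
    obtain ⟨N₁, h₁⟩ := ih
    obtain ⟨N₂, h₂⟩ := hst.developTo_eq
    exact ⟨max N₁ N₂, fun N hN => (h₁ N (le_of_max_le_left hN)).trans
      (h₂ N (le_of_max_le_right hN))⟩

/-- Fails in the ungraded monoid `M_E`, where a vertex with two loops satisfies `v = v + v`. -/
lemma eq_zero_of_tcon_self_add {a x : Multiset (V × ℤ)} (h : G.tcon a (a + x)) : x = 0 := by
  obtain ⟨z, haz, hz⟩ := tcon_iff_join.1 h
  obtain ⟨z₁, z₂, haz₁, hxz₂, rfl⟩ := hz.exists_of_add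
  obtain ⟨N₁, h₁⟩ := haz.developTo_eq
  obtain ⟨N₂, h₂⟩ := haz₁.developTo_eq
  have hdev : G.developTo (max N₁ N₂) z₂ = 0 := by
    have := (h₂ _ (le_max_right _ _)).symm.trans (h₁ _ (le_max_left _ _))
    rwa [developTo_add, left_eq_add] at this
  have hz₂ : z₂ = 0 := Multiset.card_eq_zero.1 <| Nat.le_zero.1 <|
    (card_le_card_developTo _ z₂).trans_eq (by rw [hdev, Multiset.card_zero])
  exact (hz₂ ▸ hxz₂).eq_zero_of_eq_zero

lemma exists_tstep_cons_of_reaches {v u : V} (h : G.Reaches v u) (i : ℤ) :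
    ∃ k D, G.TStep {(v, i)} ((u, k) ::ₘ D) := by
  induction h with
  | refl => exact ⟨i, 0, .refl⟩
  | @tail a b _ hab ih =>
    obtain ⟨k, D, hred⟩ := ih
    obtain ⟨e, rfl, rfl⟩ := hab
    have he : e ∈ G.emit (G.s e) := (G.mem_emit e _).2 rfl
    obtain ⟨rest, hrest⟩ : ∃ rest, G.expand (G.s e) k = (G.r e, k + 1) ::ₘ rest :=
      Multiset.exists_cons_of_mem (Multiset.mem_map_of_mem _ he)
    refine ⟨k + 1, rest + D, hred.tail ?_⟩
    simpa only [hrest, Multiset.cons_add] using tstep1_cons (Finset.ne_empty_of_mem he) k D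

lemma exists_tstep_of_bifurcation {v u : V} (hvu : G.Reaches v u) (hu : 1 < (G.emit u).card)
    (i : ℤ) : ∃ p c, c ≠ 0 ∧ G.TStep {(v, i)} (p ::ₘ c) := by
  obtain ⟨k, D, hred⟩ := exists_tstep_cons_of_reaches hvu i
  have hcard : 1 < Multiset.card (G.expand u k) := by rwa [card_expand]
  obtain ⟨p, hp⟩ := Multiset.card_pos_iff_exists_mem.1 (zero_lt_one.trans hcard)
  obtain ⟨rest, hrest⟩ := Multiset.exists_cons_of_mem hp
  have hrest0 : rest ≠ 0 := by
    rintro rfl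
    simp [hrest] at hcard
  refine ⟨p, rest + D, fun h => hrest0 (add_eq_zero.1 h).1, hred.tail ?_⟩
  simpa only [hrest, Multiset.cons_add] using
    tstep1_cons (Finset.card_pos.1 (zero_lt_one.trans hu)).ne_empty k D

lemma NoBifurcation.exists_eq_singleton {v : V} (hv : G.NoBifurcation v) {i : ℤ}
    {z : Multiset (V × ℤ)} (h : G.TStep {(v, i)} z) : ∃ u k, G.Reaches v u ∧ z = {(u, k)} := by
  induction h with
  | refl => exact ⟨v, i, .refl, rfl⟩
  | tail _ hst ih =>
    obtain ⟨u, k, hvu, rfl⟩ := ih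
    obtain ⟨w, j, hm, hw, rfl⟩ := tstep1_iff.1 hst
    obtain ⟨rfl, rfl⟩ := Prod.ext_iff.1 (Multiset.mem_singleton.1 hm)
    obtain ⟨e, he⟩ : ∃ e, G.emit w = {e} := Finset.card_eq_one.1 <|
      le_antisymm (hv w hvu) (Finset.card_pos.2 (Finset.nonempty_iff_ne_empty.2 hw))
    have hse : G.s e = w := (G.mem_emit e w).1 (he ▸ Finset.mem_singleton_self e)
    refine ⟨G.r e, j + 1, hvu.tail ⟨e, hse, rfl⟩, ?_⟩
    simp only [Multiset.erase_singleton, zero_add, expand, he]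
    rfl

lemma NoBifurcation.eq_zero_of_tcon_add {v : V} (hv : G.NoBifurcation v) {i : ℤ}
    {b c : Multiset (V × ℤ)} (h : G.tcon {(v, i)} (b + c)) (hb : b ≠ 0) : c = 0 := by
  obtain ⟨z, hvz, hz⟩ := tcon_iff_join.1 h
  obtain ⟨u, k, -, rfl⟩ := hv.exists_eq_singleton hvz
  obtain ⟨x, y, hbx, hcy, hxy⟩ := hz.exists_of_add
  have hx : 0 < Multiset.card x := (Multiset.card_pos.2 hb).trans_le hbx.card_le
  have hcard := congrArg Multiset.card hxy
  rw [Multiset.card_singleton, Multiset.card_add] at hcard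
  have hy : y = 0 := Multiset.card_eq_zero.1 (by omega)
  exact (hy ▸ hcy).eq_zero_of_eq_zero

lemma NoBifurcation.tmin_tgen {v : V} (hv : G.NoBifurcation v) (i : ℤ) :
    G.TMin (G.tgen v i) := by
  rintro b hb ⟨c, hc⟩
  obtain ⟨B, rfl⟩ := AddCon.mk'_surjective b
  obtain ⟨C, rfl⟩ := AddCon.mk'_surjective c
  have hB : B ≠ 0 := by
    rintro rfl
    exact hb (map_zero _)
  obtain rfl : C = 0 :=
    hv.eq_zero_of_tcon_add ((AddCon.eq _).1 (hc.trans (map_add _ _ _).symm)) hB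
  refine ⟨0, ?_⟩
  rw [add_zero, hc, map_zero]
  exact (add_zero _).symm

lemma noBifurcation_of_tmin_tgen {v : V} {i : ℤ} (h : G.TMin (G.tgen v i)) :
    G.NoBifurcation v := by
  intro u hvu
  by_contra! hu
  obtain ⟨p, c, hc, hred⟩ := exists_tstep_of_bifurcation hvu hu i
  have hp : G.tcon.mk' {p} ≠ 0 := fun h0 => Multiset.singleton_ne_zero p <|
    eq_zero_of_tcon_zero ((AddCon.eq _).1 (h0.trans (map_zero G.tcon.mk').symm))
  have hvp : G.tcon {(v, i)} ({p} + c) := by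
    simpa only [Multiset.singleton_add] using hred.tcon
  obtain ⟨d, hd⟩ := h _ hp ⟨G.tcon.mk' c, ((AddCon.eq _).2 hvp).trans (map_add G.tcon.mk' _ _)⟩
  obtain ⟨D, rfl⟩ := AddCon.mk'_surjective d
  have hpD : G.tcon {p} ({(v, i)} + D) := (AddCon.eq _).1 (hd.trans (map_add _ _ _).symm)
  have habsorb : G.tcon {(v, i)} ({(v, i)} + (D + c)) := by
    rw [← add_assoc]
    exact G.tcon.trans hvp (G.tcon.add hpD (G.tcon.refl c))
  exact hc (add_eq_zero.1 (eq_zero_of_tcon_self_add habsorb)).2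

end RFGraph

/-- A vertex `v` has no bifurcation (every vertex reachable from `v` emits at most one
edge) if and only if `v = v(0)` is a minimal element of `M_E^{gr}`. -/
theorem no_bifurcation_iff_minimal {V Ed : Type} [DecidableEq V] (G : RFGraph V Ed)
    (v : V) :
    (∀ u : V, G.Reaches v u → (G.emit u).card ≤ 1) ↔ G.TMin (G.tgen v 0) :=
  ⟨fun h => RFGraph.NoBifurcation.tmin_tgen h 0, RFGraph.noBifurcation_of_tmin_tgen⟩
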